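/- Let $u,v,x,y$ be elements of a Coxeter group with $\ell(ux)=\ell(u)+\ell(x)$, $\ell(vy)=\ell(v)+\ell(y)$, and $ux = vy$. Then $u \ge v$ in the Bruhat order if and only if $x \le y$ in the Bruhat order. -/

import Mathlib

/-!
Induct on `ℓ u`. A left descent `s` of `u` is, by length additivity, also a left descent of
`u x = v y`. If `s v < v`, the lifting property gives `s v ≤ s u`, and `(s u) x = (s v) y` is a
shorter instance. Otherwise `v ≤ s u`, and strong exchange in a reduced word of `v y` must delete a
letter of `y`: `s v y = v y₁` with `y₁ ⋖ y`, so induction gives `x ≤ y₁ ⋖ y`. The converse is the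
same statement for `y⁻¹ v⁻¹ = x⁻¹ u⁻¹`.

Strong exchange comes from the action of `W` on `W × ZMod 2` in which `π ω` shifts the parity at
`t` by the number of occurrences of `t` in the left inversion sequence of `ω`: this parity depends
only on `π ω`, and a reflection `t` flips the parity at `t` (Björner–Brenti, Thm. 1.4.3).
-/

namespace PaperStmt

open scoped Classical

variable {B : Type*} {W : Type*} [Group W] {M : CoxeterMatrix B}

/-- Bruhat (strong) cover: `v = t * u` for a reflection `t`, with `ℓ v = ℓ u + 1`. -/
def BruhatCov (cs : CoxeterSystem M W) (u v : W) : Prop :=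
  cs.length v = cs.length u + 1 ∧ ∃ t : W, cs.IsReflection t ∧ v = t * u

/-- The Bruhat (strong) order, generated by the covering relations. -/
def BruhatLe (cs : CoxeterSystem M W) : W → W → Prop :=
  Relation.ReflTransGen (BruhatCov cs)

/-- Strict Bruhat order. -/
def BruhatLt (cs : CoxeterSystem M W) (u v : W) : Prop :=
  BruhatLe cs u v ∧ u ≠ v

/-- Left weak order: `u ≤_L v` iff `ℓ(v u⁻¹) + ℓ u = ℓ v`. -/
def leftLe (cs : CoxeterSystem M W) (u v : W) : Prop :=
  cs.length (v * u⁻¹) + cs.length u = cs.length v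

/-- Right weak order: `u ≤_R v` iff `ℓ u + ℓ(u⁻¹ v) = ℓ v`. -/
def rightLe (cs : CoxeterSystem M W) (u v : W) : Prop :=
  cs.length u + cs.length (u⁻¹ * v) = cs.length v

/-- Demazure action of a simple reflection: `φ_s(x) = s x` if `s x > x`, else `x`. -/
noncomputable def phi (cs : CoxeterSystem M W) (i : B) (x : W) : W :=
  if BruhatLt cs x (cs.simple i * x) then cs.simple i * x else x

/-- Anti-Demazure action: `ψ_s(x) = s x` if `s x < x`, else `x`. -/
noncomputable def psi (cs : CoxeterSystem M W) (i : B) (x : W) : W :=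
  if BruhatLt cs (cs.simple i * x) x then cs.simple i * x else x

/-- Right anti-Demazure action: `ψ^R_s(x) = x s` if `x s < x`, else `x`. -/
noncomputable def psiR (cs : CoxeterSystem M W) (i : B) (x : W) : W :=
  if BruhatLt cs (x * cs.simple i) x then x * cs.simple i else x

/-- `φ_w` along a word `w = s_1 ⋯ s_n`: `φ_{s_1} ∘ ⋯ ∘ φ_{s_n}`. -/
noncomputable def phiWord (cs : CoxeterSystem M W) (ω : List B) (x : W) : W :=
  ω.foldr (phi cs) x

/-- `ψ_w` along a word `w = s_1 ⋯ s_n`: `ψ_{s_1} ∘ ⋯ ∘ ψ_{s_n}`. -/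
noncomputable def psiWord (cs : CoxeterSystem M W) (ω : List B) (x : W) : W :=
  ω.foldr (psi cs) x

/-- `ψ^R_w` along a word `w = s_1 ⋯ s_n`: `ψ^R_{s_n} ∘ ⋯ ∘ ψ^R_{s_1}`. -/
noncomputable def psiRWord (cs : CoxeterSystem M W) (ω : List B) (x : W) : W :=
  ω.foldl (fun y i => psiR cs i y) x

end PaperStmt

namespace CoxeterSystem

variable {B W : Type*} [Group W] {M : CoxeterMatrix B}

open List

variable (cs : CoxeterSystem M W)

local prefix:100 "s" => cs.simple
local prefix:100 "π" => cs.wordProd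
local prefix:100 "ℓ" => cs.length
local prefix:100 "lis " => cs.leftInvSeq

theorem getElem_leftInvSeq_alternatingWord_add (i j : B) (k : ℕ) (hk : k < M i j) :
    (lis (alternatingWord i j (2 * M i j)))[k + M i j]'(by simp; omega) =
        (lis (alternatingWord i j (2 * M i j)))[k]'(by simp; omega) := by
  rw [getElem_leftInvSeq_alternatingWord cs i j _ _ (by omega),
    getElem_leftInvSeq_alternatingWord cs i j _ _ (by omega),
    prod_alternatingWord_eq_mul_pow, prod_alternatingWord_eq_mul_pow]
  have hdiv : ∀ n, (2 * n + 1) / 2 = n := by omega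
  simp [hdiv, pow_add]

section ReflectionRepresentation

variable [DecidableEq W]

noncomputable def simplePerm (i : B) : Equiv.Perm (W × ZMod 2) :=
  Equiv.prodShear (MulAut.conj (s i)).toEquiv
    (fun x => Equiv.addRight (if x = s i then 1 else 0))

@[simp]
theorem simplePerm_apply (i : B) (x : W) (e : ZMod 2) :
    cs.simplePerm i (x, e) = (s i * x * s i, e + if x = s i then 1 else 0) := by
  simp [simplePerm, Equiv.prodShear]

theorem prod_map_simplePerm_apply (ω : List B) (x : W) (e : ZMod 2) :
    (ω.map cs.simplePerm).prod (x, e) =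
      (π ω * x * (π ω)⁻¹, e + (lis ω).count (π ω * x * (π ω)⁻¹)) := by
  induction ω with
  | nil => simp
  | cons i ω ih =>
    set y := π ω * x * (π ω)⁻¹
    have hconj : s i * y * s i = s i ↔ y = s i := by
      rw [← (MulAut.conj (s i)).injective.eq_iff]
      simp [mul_assoc]
    simp only [map_cons, prod_cons, Equiv.Perm.mul_apply, ih, simplePerm_apply, wordProd_cons,
      leftInvSeq, count_cons]
    have hy : s i * π ω * x * (s i * π ω)⁻¹ = MulAut.conj (s i) y := by
      simp [y, mul_assoc]
    rw [hy, count_map_of_injective _ _ (MulAut.conj (s i)).injective]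
    simp [hconj, eq_comm (a := s i), add_assoc]

theorem prod_map_simplePerm_alternatingWord (i j : B) (m : ℕ) :
    ((alternatingWord i j (2 * m)).map cs.simplePerm).prod =
      (cs.simplePerm i * cs.simplePerm j) ^ m := by
  induction m with
  | zero => simp [alternatingWord]
  | succ m ih =>
    rw [show 2 * (m + 1) = 2 * m + 1 + 1 by ring, alternatingWord_succ', alternatingWord_succ']
    simp [ih, pow_succ', mul_assoc]

theorem even_count_leftInvSeq_alternatingWord (i j : B) (y : W) :
    Even ((lis (alternatingWord i j (2 * M i j))).count y) := by
  set L := lis (alternatingWord i j (2 * M i j))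
  have hdrop : L.drop (M i j) = L.take (M i j) := by
    apply ext_getElem (by simp [L]; omega)
    intro k hk _
    simp only [getElem_drop, getElem_take, add_comm (M i j) k]
    exact cs.getElem_leftInvSeq_alternatingWord_add i j k (by simp [L] at hk; omega)
  rw [← take_append_drop (M i j) L, count_append, hdrop]
  exact ⟨_, rfl⟩

theorem isLiftable_simplePerm : M.IsLiftable cs.simplePerm := by
  intro i j
  have hword : π (alternatingWord i j (2 * M i j)) = 1 := by
    rw [prod_alternatingWord_eq_mul_pow]
    simp [simple_mul_simple_pow]
  ext ⟨x, e⟩ : 1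
  rw [← prod_map_simplePerm_alternatingWord, prod_map_simplePerm_apply, hword]
  simp [(ZMod.natCast_eq_zero_iff_even).mpr (cs.even_count_leftInvSeq_alternatingWord i j x)]

noncomputable def reflRep : W →* Equiv.Perm (W × ZMod 2) :=
  cs.lift ⟨cs.simplePerm, cs.isLiftable_simplePerm⟩

theorem reflRep_wordProd (ω : List B) (x : W) (e : ZMod 2) :
    cs.reflRep (π ω) (x, e) =
      (π ω * x * (π ω)⁻¹, e + (lis ω).count (π ω * x * (π ω)⁻¹)) := by
  rw [← prod_map_simplePerm_apply, wordProd, map_list_prod, map_map]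
  congr 3
  funext i
  exact cs.lift_apply_simple cs.isLiftable_simplePerm i

theorem reflRep_apply (g x : W) (e : ZMod 2) :
    cs.reflRep g (x, e) = (g * x * g⁻¹, e + (cs.reflRep g (x, 0)).2) := by
  obtain ⟨ω, rfl⟩ := cs.wordProd_surjective g
  simp [reflRep_wordProd]

theorem reflRep_self {t : W} (ht : cs.IsReflection t) : cs.reflRep t (t, 0) = (t, 1) := by
  obtain ⟨z, i, rfl⟩ := ht
  set a := (cs.reflRep z⁻¹ (z * s i * z⁻¹, 0)).2
  set b := (cs.reflRep z (s i, 0)).2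
  have hback : cs.reflRep z (cs.reflRep z⁻¹ (z * s i * z⁻¹, 0)) = (z * s i * z⁻¹, 0) := by
    rw [← Equiv.Perm.mul_apply, ← map_mul, mul_inv_cancel, map_one, Equiv.Perm.one_apply]
  have hdown : cs.reflRep z⁻¹ (z * s i * z⁻¹, 0) = (s i, a) := by
    rw [reflRep_apply]
    simp [a, mul_assoc]
  have hab : a + b = 0 := by
    rw [hdown, reflRep_apply] at hback
    exact congrArg Prod.snd hback
  calc cs.reflRep (z * s i * z⁻¹) (z * s i * z⁻¹, 0)
      = cs.reflRep z (cs.simplePerm i (cs.reflRep z⁻¹ (z * s i * z⁻¹, 0))) := by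
        rw [map_mul, map_mul, reflRep, lift_apply_simple]; rfl
    _ = (z * s i * z⁻¹, a + 1 + b) := by
        rw [hdown, simplePerm_apply, reflRep_apply]
        simp [b]
    _ = (z * s i * z⁻¹, 1) := by
        rw [add_right_comm, hab, zero_add]

end ReflectionRepresentation

/-- Otherwise `t * π ω` would have the parity of `t` at `t`, so `t` would occur in a reduced word
of `t * π ω` and be a left inversion of it too. -/
theorem mem_leftInvSeq_of_isLeftInversion {ω : List B} {t : W}
    (ht : cs.IsLeftInversion (π ω) t) : t ∈ lis ω := by
  classical
  by_contra hmem
  obtain ⟨τ, hτ, hτω⟩ := cs.exists_isReduced (t * π ω)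
  have hconj : π τ * ((π ω)⁻¹ * t * π ω) * (π τ)⁻¹ = t := by
    rw [← hτω, ← ht.1.inv]; group
  have hodd : ((lis τ).count t : ZMod 2) = 1 := by
    have h := cs.reflRep_wordProd τ ((π ω)⁻¹ * t * π ω) 0
    have hw : π ω * ((π ω)⁻¹ * t * π ω) * (π ω)⁻¹ = t := by group
    rw [hconj, ← hτω, map_mul, Equiv.Perm.mul_apply, reflRep_wordProd, hw,
      count_eq_zero.mpr hmem, Nat.cast_zero, add_zero, reflRep_self cs ht.1] at h
    simpa using (congrArg Prod.snd h).symm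
  have hτt : cs.IsLeftInversion (π τ) t :=
    cs.isLeftInversion_of_mem_leftInvSeq hτ (count_pos_iff.mp (Nat.pos_of_ne_zero (by
      rintro h; simp [h] at hodd)))
  have := hτt.2
  rw [← hτω, ← mul_assoc, ht.1.mul_self, one_mul] at this
  exact lt_asymm ht.2 this

theorem IsReduced.length_wordProd_eraseIdx_lt {cs : CoxeterSystem M W} {ω : List B}
    (hω : cs.IsReduced ω) {j : ℕ} (hj : j < ω.length) : cs.length (cs.wordProd (ω.eraseIdx j)) < cs.length (cs.wordProd ω) :=
  calc cs.length (cs.wordProd (ω.eraseIdx j))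
    _ ≤ (ω.eraseIdx j).length := cs.length_wordProd_le _
    _ < ω.length := by rw [length_eraseIdx_of_lt hj]; omega
    _ = cs.length (cs.wordProd ω) := hω.symm

theorem exists_mul_wordProd_eq_eraseIdx {ω : List B} {t : W}
    (ht : cs.IsLeftInversion (π ω) t) : ∃ j < ω.length, t * π ω = π (ω.eraseIdx j) := by
  obtain ⟨j, hj, rfl⟩ := mem_iff_getElem.mp (cs.mem_leftInvSeq_of_isLeftInversion ht)
  rw [length_leftInvSeq] at hj
  exact ⟨j, hj, by rw [← getD_eq_getElem _ 1, getD_leftInvSeq_mul_wordProd]⟩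

theorem exchange_of_isLeftInversion_mul {a b t : W} (ht : cs.IsLeftInversion (a * b) t) :
    (∃ a', ℓ a' < ℓ a ∧ t * (a * b) = a' * b) ∨ (∃ b', ℓ b' < ℓ b ∧ t * (a * b) = a * b') := by
  obtain ⟨α, hα, rfl⟩ := cs.exists_isReduced a
  obtain ⟨β, hβ, rfl⟩ := cs.exists_isReduced b
  rw [← wordProd_append] at ht ⊢
  obtain ⟨j, hj, hexch⟩ := cs.exists_mul_wordProd_eq_eraseIdx ht
  rw [hexch]
  rcases lt_or_ge j α.length with hjα | hjα
  · refine .inl ⟨π (α.eraseIdx j), hα.length_wordProd_eraseIdx_lt hjα, ?_⟩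
    rw [eraseIdx_append_of_lt_length hjα, wordProd_append]
  · have hjβ : j - α.length < β.length := by rw [length_append] at hj; omega
    refine .inr ⟨π (β.eraseIdx (j - α.length)), hβ.length_wordProd_eraseIdx_lt hjβ, ?_⟩
    rw [eraseIdx_append_of_length_le hjα, wordProd_append]

theorem length_simple_mul_mul_of_isLeftDescent {u x : W} {i : B} (hux : ℓ (u * x) = ℓ u + ℓ x)
    (hu : cs.IsLeftDescent u i) : ℓ (s i * u * x) = ℓ (s i * u) + ℓ x := by
  have hsu := cs.isLeftDescent_iff.mp hu
  have hle := cs.length_mul_le (s i * u) x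
  have hge := cs.length_simple_mul (s i * u * x) i
  rw [← mul_assoc, ← mul_assoc, simple_mul_simple_self, one_mul] at hge
  omega

theorem isLeftDescent_mul_of_isLeftDescent {u x : W} {i : B} (hux : ℓ (u * x) = ℓ u + ℓ x)
    (hu : cs.IsLeftDescent u i) : cs.IsLeftDescent (u * x) i := by
  have := cs.length_simple_mul_mul_of_isLeftDescent hux hu
  rw [IsLeftDescent, ← mul_assoc, this, hux]
  exact Nat.add_lt_add_right hu _

end CoxeterSystem

namespace PaperStmt

open CoxeterSystem

variable {B W : Type*} [Group W] {M : CoxeterMatrix B}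

section

variable {cs : CoxeterSystem M W}

local prefix:100 "s" => cs.simple
local prefix:100 "ℓ" => cs.length

theorem BruhatLe.length_le {u v : W} (h : BruhatLe cs u v) : ℓ u ≤ ℓ v := by
  induction h with
  | refl => rfl
  | tail _ hcov ih => exact ih.trans (hcov.1 ▸ Nat.le_succ _)

theorem BruhatLe.eq_one {v : W} (h : BruhatLe cs v 1) : v = 1 :=
  cs.length_eq_zero_iff.mp (Nat.le_zero.mp (cs.length_one ▸ h.length_le))

theorem BruhatCov.inv {u v : W} (h : BruhatCov cs u v) : BruhatCov cs u⁻¹ v⁻¹ := by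
  obtain ⟨hlen, t, ht, rfl⟩ := h
  refine ⟨by simp only [length_inv, hlen], u⁻¹ * t * u, by simpa using ht.conj u⁻¹, ?_⟩
  rw [mul_inv_rev, ht.inv]
  group

theorem BruhatLe.inv {u v : W} (h : BruhatLe cs u v) : BruhatLe cs u⁻¹ v⁻¹ := by
  induction h with
  | refl => exact .refl
  | tail _ hcov ih => exact ih.tail hcov.inv

theorem BruhatCov.simple_mul {w u : W} {i : B} (hcov : BruhatCov cs w u)
    (hu : cs.IsLeftDescent u i) (hw : cs.IsLeftDescent w i) : BruhatCov cs (s i * w) (s i * u) := by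
  obtain ⟨hlen, t, ht, rfl⟩ := hcov
  refine ⟨?_, s i * t * s i, by simpa using ht.conj (s i), by simp [mul_assoc]⟩
  have := cs.isLeftDescent_iff.mp hu
  have := cs.isLeftDescent_iff.mp hw
  omega

theorem BruhatCov.eq_simple_mul {w u : W} {i : B} (hcov : BruhatCov cs w u)
    (hu : cs.IsLeftDescent u i) (hw : ¬ cs.IsLeftDescent w i) : u = s i * w := by
  obtain ⟨hlen, t, ht, rfl⟩ := hcov
  have hsu := cs.isLeftDescent_iff.mp hu
  have hsw := cs.not_isLeftDescent_iff.mp hw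
  have hinv : cs.IsLeftInversion (s i * (s i * (t * w))) t := by
    refine ⟨ht, ?_⟩
    rw [simple_mul_simple_cancel_left, ← mul_assoc, ht.mul_self, one_mul]
    omega
  rcases cs.exchange_of_isLeftInversion_mul hinv with ⟨a, ha, hexch⟩ | ⟨b, hb, hexch⟩
  · rw [length_simple, Nat.lt_one_iff, length_eq_zero_iff] at ha
    rw [ha, one_mul, simple_mul_simple_cancel_left, ← mul_assoc, ht.mul_self, one_mul] at hexch
    calc t * w = s i * (s i * (t * w)) := (cs.simple_mul_simple_cancel_left i).symm
      _ = s i * w := by rw [← hexch]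
  · rw [simple_mul_simple_cancel_left, ← mul_assoc, ht.mul_self, one_mul] at hexch
    obtain rfl : s i * w = b := by rw [hexch, simple_mul_simple_cancel_left]
    omega

theorem BruhatLe.simple_mul {v u : W} {i : B} (hle : BruhatLe cs v u)
    (hu : cs.IsLeftDescent u i) (hv : cs.IsLeftDescent v i) : BruhatLe cs (s i * v) (s i * u) := by
  induction hle with
  | refl => exact .refl
  | @tail w u hvw hcov ih =>
    by_cases hw : cs.IsLeftDescent w i
    · exact (ih hw).tail (hcov.simple_mul hu hw)
    · rw [hcov.eq_simple_mul hu hw, simple_mul_simple_cancel_left]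
      refine .head ⟨(cs.isLeftDescent_iff.mp hv).symm, s i, cs.isReflection_simple i, ?_⟩ hvw
      rw [simple_mul_simple_cancel_left]

theorem BruhatLe.le_simple_mul {v u : W} {i : B} (hle : BruhatLe cs v u)
    (hu : cs.IsLeftDescent u i) (hv : ¬ cs.IsLeftDescent v i) : BruhatLe cs v (s i * u) := by
  induction hle with
  | refl => exact absurd hu hv
  | @tail w u hvw hcov ih =>
    by_cases hw : cs.IsLeftDescent w i
    · exact (ih hw).tail (hcov.simple_mul hu hw)
    · rwa [hcov.eq_simple_mul hu hw, simple_mul_simple_cancel_left]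

theorem exists_bruhatCov_of_isLeftDescent_mul {v y : W} {i : B} (hvy : ℓ (v * y) = ℓ v + ℓ y)
    (hdesc : cs.IsLeftDescent (v * y) i) (hv : ¬ cs.IsLeftDescent v i) :
    ∃ y₁, s i * (v * y) = v * y₁ ∧ ℓ (v * y₁) = ℓ v + ℓ y₁ ∧ BruhatCov cs y₁ y := by
  rcases cs.exchange_of_isLeftInversion_mul
      ((cs.isLeftInversion_simple_iff_isLeftDescent _ _).mpr hdesc) with
    ⟨a, ha, hexch⟩ | ⟨y₁, hy₁, hexch⟩
  · rw [← mul_assoc] at hexch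
    obtain rfl := mul_right_cancel hexch
    exact absurd ha hv
  · have hsvy := cs.isLeftDescent_iff.mp hdesc
    have hsub := cs.length_mul_le v y₁
    rw [hexch] at hsvy
    refine ⟨y₁, hexch, by omega, by omega, v⁻¹ * s i * v,
      by simpa using (cs.isReflection_simple i).conj v⁻¹, ?_⟩
    calc y = v⁻¹ * (s i * (s i * (v * y))) := by simp
      _ = v⁻¹ * s i * v * y₁ := by rw [hexch]; group

theorem bruhatLe_of_mul_eq_mul {u v x y : W} (hux : ℓ (u * x) = ℓ u + ℓ x)
    (hvy : ℓ (v * y) = ℓ v + ℓ y) (h : u * x = v * y) (hle : BruhatLe cs v u) :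
    BruhatLe cs x y := by
  induction hn : ℓ u generalizing u v x y with
  | zero =>
    obtain rfl := cs.length_eq_zero_iff.mp hn
    obtain rfl := hle.eq_one
    rw [one_mul, one_mul] at h
    exact h ▸ .refl
  | succ n ih =>
    obtain ⟨i, hi⟩ := cs.exists_leftDescent_of_ne_one (w := u) (by rintro rfl; simp at hn)
    have hsu : ℓ (s i * u) = n := by have := cs.isLeftDescent_iff.mp hi; omega
    have hsux := cs.length_simple_mul_mul_of_isLeftDescent hux hi
    by_cases hv : cs.IsLeftDescent v i
    · refine ih hsux (cs.length_simple_mul_mul_of_isLeftDescent hvy hv) ?_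
        (hle.simple_mul hi hv) hsu
      rw [mul_assoc, mul_assoc, h]
    · have hdesc : cs.IsLeftDescent (v * y) i := h ▸ cs.isLeftDescent_mul_of_isLeftDescent hux hi
      obtain ⟨y₁, hsplit, hvy₁, hcov⟩ := exists_bruhatCov_of_isLeftDescent_mul hvy hdesc hv
      refine (ih hsux hvy₁ ?_ (hle.le_simple_mul hi hv) hsu).tail hcov
      rw [mul_assoc, h, hsplit]

end

theorem stmt9 (cs : CoxeterSystem M W) (u v x y : W)
    (hu : cs.length (u * x) = cs.length u + cs.length x)
    (hv : cs.length (v * y) = cs.length v + cs.length y)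
    (h : u * x = v * y) :
    BruhatLe cs v u ↔ BruhatLe cs x y := by
  have hinv : ∀ a b : W, cs.length (a * b) = cs.length a + cs.length b →
      cs.length (b⁻¹ * a⁻¹) = cs.length b⁻¹ + cs.length a⁻¹ := by
    intro a b hab
    rw [← mul_inv_rev, length_inv, length_inv, length_inv, hab, add_comm]
  refine ⟨bruhatLe_of_mul_eq_mul hu hv h, fun hxy => ?_⟩
  have := bruhatLe_of_mul_eq_mul (hinv v y hv) (hinv u x hu)
    (by rw [← mul_inv_rev, ← mul_inv_rev, h]) hxy.inv
  simpa using this.inv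

end PaperStmt
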